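/- For every ε ∈ (0,1), there exists a finite collection N of ordered orthonormal bases of ℂ² such that |N| ≤ (5/ε)^8 and for every ordered orthonormal basis β of ℂ² there is some γ ∈ N with ‖β − γ‖_B ≤ (1 + 2√2)√ε. -/

import Mathlib

noncomputable section
open scoped BigOperators Classical ComplexOrder
open Matrix Complex Real

/-- The trace norm `‖M‖₁ = tr √(MᴴM)` of a complex square matrix. -/
def traceNorm {I : Type*} [Fintype I] [DecidableEq I] (M : Matrix I I ℂ) : ℝ :=
  (((Matrix.posSemidef_conjTranspose_mul_self M).1.eigenvectorUnitary : Matrix I I ℂ) *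
    Matrix.diagonal (((↑) : ℝ → ℂ) ∘ Real.sqrt ∘ (Matrix.posSemidef_conjTranspose_mul_self M).1.eigenvalues) *
    (star (Matrix.posSemidef_conjTranspose_mul_self M).1.eigenvectorUnitary : Matrix I I ℂ)).trace.re

/-- The rank-one outer product `|u⟩⟨u| = u u†` of a vector. -/
def outer {I : Type*} [Fintype I] (u : EuclideanSpace ℂ I) : Matrix I I ℂ :=
  Matrix.of fun i j => u i * (starRingEnd ℂ) (u j)

/-- The basis norm `‖β − γ‖_B = max_i ‖|βᵢ⟩⟨βᵢ| − |γᵢ⟩⟨γᵢ|‖₁` between two ordered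
families of vectors with the same index set. -/
def basisNorm {I J : Type*} [Fintype J] [DecidableEq J]
    (β γ : I → EuclideanSpace ℂ J) : ℝ :=
  ⨆ i, traceNorm (outer (β i) - outer (γ i))

lemma my_tn_aux {I : Type*} [Fintype I] [DecidableEq I] (M : Matrix I I ℂ) {A : Matrix I I ℂ}
    (hA : A.IsHermitian) (hMA : Mᴴ * M = A) : traceNorm M =
    ((hA.eigenvectorUnitary : Matrix I I ℂ) *
    Matrix.diagonal (((↑) : ℝ → ℂ) ∘ Real.sqrt ∘ hA.eigenvalues) *
    (star hA.eigenvectorUnitary : Matrix I I ℂ)).trace.re := by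
  subst hMA; rfl

lemma my_ev_scalar {I : Type*} [Fintype I] [DecidableEq I] (k : ℝ)
    (hA : ((k:ℂ) • (1 : Matrix I I ℂ)).IsHermitian) (i : I) : hA.eigenvalues i = k := by
  rw [hA.eigenvalues_eq, Matrix.smul_mulVec, Matrix.one_mulVec, dotProduct_smul,
    dotProduct_comm, ← EuclideanSpace.inner_eq_star_dotProduct, inner_self_eq_norm_sq_to_K,
    hA.eigenvectorBasis.orthonormal.1 i]
  simp

lemma my_traceNorm_of_sq_scalar (M : Matrix (Fin 2) (Fin 2) ℂ) (k : ℝ) (hk : 0 ≤ k)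
    (h : Mᴴ * M = (k : ℂ) • 1) : traceNorm M = 2 * Real.sqrt k := by
  have hpsd : ((k : ℂ) • (1 : Matrix (Fin 2) (Fin 2) ℂ)).PosSemidef := by
    rw [← h]; exact Matrix.posSemidef_conjTranspose_mul_self M
  have hD : Matrix.diagonal (((↑) : ℝ → ℂ) ∘ Real.sqrt ∘ hpsd.1.eigenvalues)
      = ((Real.sqrt k : ℝ) : ℂ) • (1 : Matrix (Fin 2) (Fin 2) ℂ) := by
    ext i j
    by_cases hij : i = j <;> simp [Matrix.diagonal_apply, Matrix.one_apply, hij, my_ev_scalar k hpsd.1]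
  have hU : (hpsd.1.eigenvectorUnitary : Matrix (Fin 2) (Fin 2) ℂ)
      * (star hpsd.1.eigenvectorUnitary : Matrix (Fin 2) (Fin 2) ℂ) = 1 := by
    exact Unitary.mul_star_self_of_mem hpsd.1.eigenvectorUnitary.2
  rw [my_tn_aux M hpsd.1 h, hD, Matrix.mul_smul, Matrix.mul_one, Matrix.smul_mul, hU,
    Matrix.trace_smul, Matrix.trace_one]
  simp; ring

lemma my_traceNorm_neg (M : Matrix (Fin 2) (Fin 2) ℂ) : traceNorm (-M) = traceNorm M := by
  rw [my_tn_aux (-M) (Matrix.posSemidef_conjTranspose_mul_self M).1 (by simp)]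
  rfl

lemma my_outer_sq (φ η : EuclideanSpace ℂ (Fin 2))
    (hφ : (starRingEnd ℂ) (φ 0) * φ 0 + (starRingEnd ℂ) (φ 1) * φ 1 = 1)
    (hη : (starRingEnd ℂ) (η 0) * η 0 + (starRingEnd ℂ) (η 1) * η 1 = 1) :
    (outer φ - outer η)ᴴ * (outer φ - outer η)
      = ((1 - Complex.normSq ((starRingEnd ℂ) (φ 0) * η 0 + (starRingEnd ℂ) (φ 1) * η 1) : ℝ) : ℂ) • 1 := by
  have hM : (outer φ - outer η)ᴴ = outer φ - outer η := by
    ext i j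
    simp [outer, Matrix.conjTranspose_apply]
    ring
  rw [hM]
  have hns : ((1 - Complex.normSq ((starRingEnd ℂ) (φ 0) * η 0 + (starRingEnd ℂ) (φ 1) * η 1) : ℝ) : ℂ)
      = 1 - ((starRingEnd ℂ) (φ 0) * η 0 + (starRingEnd ℂ) (φ 1) * η 1)
          * (starRingEnd ℂ) ((starRingEnd ℂ) (φ 0) * η 0 + (starRingEnd ℂ) (φ 1) * η 1) := by
    rw [Complex.mul_conj]; push_cast; ring
  have hφη : ((starRingEnd ℂ) (φ 0) * φ 0 + (starRingEnd ℂ) (φ 1) * φ 1)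
      * ((starRingEnd ℂ) (η 0) * η 0 + (starRingEnd ℂ) (η 1) * η 1) = 1 := by
    rw [hφ, hη]; ring
  rw [hns]
  ext i j
  fin_cases i <;> fin_cases j <;>
    simp [outer, Matrix.mul_apply, Fin.sum_univ_two, Matrix.smul_apply, Matrix.one_apply,
      map_add, _root_.map_mul] <;> ring_nf
  · linear_combination (φ 0 * (starRingEnd ℂ) (φ 0) + η 1 * (starRingEnd ℂ) (η 1) + 1) * hφ
      + (φ 1 * (starRingEnd ℂ) (φ 1) + η 0 * (starRingEnd ℂ) (η 0) + 1) * hη - hφη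
  · linear_combination (φ 0 * (starRingEnd ℂ) (φ 1) - η 0 * (starRingEnd ℂ) (η 1)) * (hφ - hη)
  · linear_combination (φ 1 * (starRingEnd ℂ) (φ 0) - η 1 * (starRingEnd ℂ) (η 0)) * (hφ - hη)
  · linear_combination (φ 1 * (starRingEnd ℂ) (φ 1) + η 0 * (starRingEnd ℂ) (η 0) + 1) * hφ
      + (φ 0 * (starRingEnd ℂ) (φ 0) + η 1 * (starRingEnd ℂ) (η 1) + 1) * hη - hφη

/-- Key bound: the trace norm of a difference of rank-one projections of unit vectors
is at most twice the ℓ² distance of the vectors. -/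
lemma my_key (φ η : EuclideanSpace ℂ (Fin 2))
    (hφ : (starRingEnd ℂ) (φ 0) * φ 0 + (starRingEnd ℂ) (φ 1) * φ 1 = 1)
    (hη : (starRingEnd ℂ) (η 0) * η 0 + (starRingEnd ℂ) (η 1) * η 1 = 1) :
    traceNorm (outer φ - outer η)
      ≤ 2 * Real.sqrt (Complex.normSq (φ 0 - η 0) + Complex.normSq (φ 1 - η 1)) := by
  set s : ℂ := (starRingEnd ℂ) (φ 0) * η 0 + (starRingEnd ℂ) (φ 1) * η 1 with hs
  have hφη : ((starRingEnd ℂ) (φ 0) * φ 0 + (starRingEnd ℂ) (φ 1) * φ 1)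
      * ((starRingEnd ℂ) (η 0) * η 0 + (starRingEnd ℂ) (η 1) * η 1) = 1 := by
    rw [hφ, hη]; ring
  -- nonnegativity of 1 - |s|²
  have hz : ((1:ℂ) - s * (starRingEnd ℂ) s)
      = (φ 0 * η 1 - φ 1 * η 0) * (starRingEnd ℂ) (φ 0 * η 1 - φ 1 * η 0) := by
    simp only [hs, map_sub, map_add, _root_.map_mul, Complex.conj_conj]
    linear_combination -hφη
  have hzr : 1 - Complex.normSq s = Complex.normSq (φ 0 * η 1 - φ 1 * η 0) := by
    have : ((1 - Complex.normSq s : ℝ) : ℂ) = ((Complex.normSq (φ 0 * η 1 - φ 1 * η 0) : ℝ) : ℂ) := by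
      rw [Complex.ofReal_sub, Complex.ofReal_one, ← Complex.mul_conj, ← Complex.mul_conj]
      exact hz
    exact_mod_cast this
  have hk0 : 0 ≤ 1 - Complex.normSq s := by
    rw [hzr]; exact Complex.normSq_nonneg _
  -- the trace norm equals 2√(1-|s|²)
  have hTN : traceNorm (outer φ - outer η) = 2 * Real.sqrt (1 - Complex.normSq s) :=
    my_traceNorm_of_sq_scalar _ _ hk0 (my_outer_sq φ η hφ hη)
  -- distance identity
  have hD : Complex.normSq (φ 0 - η 0) + Complex.normSq (φ 1 - η 1) = 2 - 2 * s.re := by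
    have hcx : (φ 0 - η 0) * (starRingEnd ℂ) (φ 0 - η 0)
        + (φ 1 - η 1) * (starRingEnd ℂ) (φ 1 - η 1) = 2 - (s + (starRingEnd ℂ) s) := by
      simp only [hs, map_sub, map_add, _root_.map_mul, Complex.conj_conj]
      linear_combination hφ + hη
    rw [Complex.mul_conj, Complex.mul_conj, Complex.add_conj] at hcx
    exact_mod_cast congrArg Complex.re hcx
  rw [hTN, hD]
  have hle : 1 - Complex.normSq s ≤ 2 - 2 * s.re := by
    have h1 : Complex.normSq s = s.re * s.re + s.im * s.im := Complex.normSq_apply s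
    nlinarith [sq_nonneg (s.re - 1), sq_nonneg s.im]
  have := Real.sqrt_le_sqrt hle
  linarith

/-- resolution of the identity for an orthonormal pair in ℂ². -/
lemma my_outer_sum (β : Fin 2 → EuclideanSpace ℂ (Fin 2)) (hβ : Orthonormal ℂ β) :
    outer (β 0) + outer (β 1) = 1 := by
  have h := orthonormal_iff_ite.mp hβ
  set U : Matrix (Fin 2) (Fin 2) ℂ := Matrix.of (fun k i => β k i) with hUdef
  have hU : U * Uᴴ = 1 := by
    ext k l
    have h1 := congrArg (starRingEnd ℂ) (h k l)
    rw [PiLp.inner_apply] at h1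
    simp only [RCLike.inner_apply, Fin.sum_univ_two, map_add, _root_.map_mul,
      Complex.conj_conj] at h1
    simp only [apply_ite (starRingEnd ℂ), _root_.map_one, _root_.map_zero] at h1
    simp only [Matrix.mul_apply, Matrix.conjTranspose_apply, Matrix.one_apply,
      Fin.sum_univ_two, hUdef, Matrix.of_apply, ← starRingEnd_apply]
    linear_combination h1
  have hU2 : Uᴴ * U = 1 := mul_eq_one_comm.mp hU
  rw [← Matrix.ext_iff] at hU2
  ext i j
  have h2 := hU2 j i
  simp only [Matrix.mul_apply, Matrix.conjTranspose_apply, Matrix.one_apply,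
    Fin.sum_univ_two, hUdef, Matrix.of_apply, ← starRingEnd_apply] at h2
  simp only [Matrix.add_apply, outer, Matrix.of_apply, Matrix.one_apply]
  rw [show β 0 i * (starRingEnd ℂ) (β 0 j) + β 1 i * (starRingEnd ℂ) (β 1 j)
    = (starRingEnd ℂ) (β 0 j) * β 0 i + (starRingEnd ℂ) (β 1 j) * β 1 i from by ring, h2]
  by_cases hij : i = j
  · simp [hij]
  · simp [hij, Ne.symm hij]

lemma my_expI_mul_conj (x : ℝ) :
    Complex.exp ((x:ℂ) * Complex.I) * (starRingEnd ℂ) (Complex.exp ((x:ℂ) * Complex.I)) = 1 := by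
  rw [Complex.mul_conj]
  rw [show Complex.normSq (Complex.exp ((x:ℂ) * Complex.I))
    = ‖Complex.exp ((x:ℂ) * Complex.I)‖ ^ 2 from (Complex.sq_norm _).symm]
  rw [Complex.norm_exp_ofReal_mul_I]
  norm_num

lemma my_conj_expI (x : ℝ) :
    (starRingEnd ℂ) (Complex.exp ((x:ℂ) * Complex.I)) = Complex.exp (-((x:ℂ) * Complex.I)) := by
  rw [← Complex.exp_conj]
  congr 1
  simp only [_root_.map_mul, Complex.conj_ofReal, Complex.conj_I]
  ring

lemma my_conj_expI2 (x : ℝ) :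
    (starRingEnd ℂ) (Complex.exp (-((x:ℂ) * Complex.I))) = Complex.exp ((x:ℂ) * Complex.I) := by
  rw [show -((x:ℂ)*Complex.I) = ((-x:ℝ):ℂ)*Complex.I from by push_cast; ring, my_conj_expI]
  congr 1
  push_cast
  ring

lemma my_expI_sub (x y : ℝ) :
    ‖Complex.exp ((x:ℂ) * Complex.I) - Complex.exp ((y:ℂ) * Complex.I)‖ ≤ |x - y| := by
  have h1 : Complex.exp ((x:ℂ)*Complex.I) - Complex.exp ((y:ℂ)*Complex.I)
      = Complex.exp ((y:ℂ)*Complex.I) * (Complex.exp (((x-y : ℝ):ℂ)*Complex.I) - 1) := by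
    rw [mul_sub, ← Complex.exp_add, mul_one]
    push_cast
    ring_nf
  rw [h1, norm_mul, Complex.norm_exp_ofReal_mul_I, one_mul]
  have h2 : ‖Complex.exp (((x-y:ℝ):ℂ)*Complex.I) - 1‖
      = Real.sqrt (2 - 2 * Real.cos (x - y)) := by
    rw [Complex.norm_def, Complex.normSq_apply]
    simp only [Complex.sub_re, Complex.sub_im, Complex.exp_ofReal_mul_I_re,
      Complex.exp_ofReal_mul_I_im, Complex.one_re, Complex.one_im]
    congr 1
    nlinarith [Real.sin_sq_add_cos_sq (x - y)]
  rw [h2]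
  have h3 : 2 - 2 * Real.cos (x - y) ≤ (x - y) ^ 2 := by
    nlinarith [Real.one_sub_sq_div_two_le_cos (x := x - y)]
  calc Real.sqrt (2 - 2 * Real.cos (x - y)) ≤ Real.sqrt ((x - y)^2) := Real.sqrt_le_sqrt h3
    _ = |x - y| := Real.sqrt_sq_eq_abs _

lemma my_cos_lip (x y : ℝ) : |Real.cos x - Real.cos y| ≤ |x - y| := by
  have h : Real.cos x - Real.cos y
      = (Complex.exp ((x:ℂ)*Complex.I) - Complex.exp ((y:ℂ)*Complex.I)).re := by
    simp [Complex.sub_re, Complex.exp_ofReal_mul_I_re]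
  rw [h]
  exact (Complex.abs_re_le_norm _).trans (my_expI_sub x y)

lemma my_sin_lip (x y : ℝ) : |Real.sin x - Real.sin y| ≤ |x - y| := by
  have h : Real.sin x - Real.sin y
      = (Complex.exp ((x:ℂ)*Complex.I) - Complex.exp ((y:ℂ)*Complex.I)).im := by
    simp [Complex.sub_im, Complex.exp_ofReal_mul_I_im]
  rw [h]
  exact (Complex.abs_im_le_norm _).trans (my_expI_sub x y)

lemma my_floor_grid {x δ : ℝ} (hx : 0 ≤ x) (hδ : 0 < δ) :
    |x - (⌊x / δ⌋₊ : ℝ) * δ| ≤ δ := by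
  have h1 : (⌊x/δ⌋₊:ℝ) ≤ x/δ := Nat.floor_le (by positivity)
  have h2 : x/δ < ⌊x/δ⌋₊ + 1 := Nat.lt_floor_add_one _
  have hx' : (x/δ)*δ = x := div_mul_cancel₀ x hδ.ne'
  have h1' := mul_le_mul_of_nonneg_right h1 hδ.le
  have h2' := mul_lt_mul_of_pos_right h2 hδ
  rw [abs_le]
  constructor
  · nlinarith
  · nlinarith

/-- first grid basis vector -/
def gv (t θ : ℝ) : EuclideanSpace ℂ (Fin 2) :=
  !₂[((Real.cos t : ℝ) : ℂ), Complex.exp ((θ:ℂ) * Complex.I) * ((Real.sin t : ℝ) : ℂ)]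

/-- second grid basis vector -/
def gw (t θ : ℝ) : EuclideanSpace ℂ (Fin 2) :=
  !₂[-(Complex.exp ((-θ:ℂ) * Complex.I) * ((Real.sin t : ℝ) : ℂ)), ((Real.cos t : ℝ) : ℂ)]

/-- grid basis -/
def gB (t θ : ℝ) : Fin 2 → EuclideanSpace ℂ (Fin 2) := ![gv t θ, gw t θ]

lemma my_gB_on (t θ : ℝ) : Orthonormal ℂ (gB t θ) := by
  have hP : ((Real.cos t : ℝ) : ℂ)^2 + ((Real.sin t : ℝ) : ℂ)^2 = 1 := by
    exact_mod_cast Real.cos_sq_add_sin_sq t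
  have hEE : Complex.exp ((θ:ℂ) * Complex.I) * Complex.exp (-((θ:ℂ) * Complex.I)) = 1 := by
    rw [← Complex.exp_add, show (θ:ℂ) * Complex.I + -((θ:ℂ) * Complex.I) = 0 from by ring,
      Complex.exp_zero]
  rw [orthonormal_iff_ite]
  intro i j
  fin_cases i <;> fin_cases j <;>
    · rw [PiLp.inner_apply]
      simp only [RCLike.inner_apply, Fin.sum_univ_two, gB, gv, gw, Matrix.cons_val_zero,
        Matrix.cons_val_one, Matrix.head_cons, map_neg, _root_.map_mul, Complex.conj_ofReal,
        neg_mul, my_conj_expI, my_conj_expI2, neg_neg, Fin.mk_one, Fin.zero_eta,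
        if_pos rfl, WithLp.ofLp_toLp, Fin.one_eq_zero_iff, Fin.zero_eq_one_iff]
      first
      | (rw [if_pos trivial]
         first
         | linear_combination ((Real.sin t : ℝ) : ℂ)^2 * hEE + hP
         | ring)
      | (rw [if_neg (by norm_num)]; ring)

lemma my_final {ε m : ℝ} (hε0 : 0 < ε) (hε1 : ε < 1) (hm : 0 < m) (hmn : 100/ε ≤ m) :
    22/m ≤ (1 + 2 * Real.sqrt 2) * Real.sqrt ε := by
  have hεn : 100 ≤ ε * m := by
    rw [div_le_iff₀ hε0] at hmn
    linarith
  have h1 : 22/m ≤ 22*ε/100 := by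
    rw [div_le_div_iff₀ hm (by norm_num : (0:ℝ) < 100)]
    nlinarith
  have hsqε : ε ≤ Real.sqrt ε := by
    have hs1 := Real.sq_sqrt hε0.le
    have hs2 := Real.sqrt_nonneg ε
    have hs3 : Real.sqrt ε ≤ 1 := Real.sqrt_le_one.mpr hε1.le
    nlinarith
  have hs2 : (0:ℝ) ≤ Real.sqrt 2 := Real.sqrt_nonneg 2
  have hsε : (0:ℝ) ≤ Real.sqrt ε := Real.sqrt_nonneg ε
  nlinarith

theorem basis_net_C2 (ε : ℝ) (hε0 : 0 < ε) (hε1 : ε < 1) :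
    ∃ 𝒩 : Finset (Fin 2 → EuclideanSpace ℂ (Fin 2)),
      ((𝒩.card : ℝ) ≤ (5 / ε) ^ 8) ∧
      (∀ γ ∈ 𝒩, Orthonormal ℂ γ) ∧
      ∀ β : Fin 2 → EuclideanSpace ℂ (Fin 2), Orthonormal ℂ β →
        ∃ γ ∈ 𝒩, basisNorm β γ ≤ (1 + 2 * Real.sqrt 2) * Real.sqrt ε := by
  classical
  set n : ℕ := ⌈(100:ℝ)/ε⌉₊ with hn_def
  have hn100 : 100/ε ≤ (n:ℝ) := Nat.le_ceil _
  have hnpos : (0:ℝ) < n := lt_of_lt_of_le (by positivity) hn100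
  refine ⟨(Finset.range (n+1) ×ˢ Finset.range (n+1)).image
      (fun p : ℕ × ℕ => gB ((p.1:ℝ)*(2/(n:ℝ))) ((p.2:ℝ)*(8/(n:ℝ)) - 4)), ?_, ?_, ?_⟩
  · -- cardinality bound
    have h1 : ((Finset.range (n+1) ×ˢ Finset.range (n+1)).image
        (fun p : ℕ × ℕ => gB ((p.1:ℝ)*(2/(n:ℝ))) ((p.2:ℝ)*(8/(n:ℝ)) - 4))).card
        ≤ (n+1)*(n+1) := by
      refine (Finset.card_image_le).trans ?_
      rw [Finset.card_product, Finset.card_range]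
    have hc1 : ((n:ℝ)+1) ≤ 102/ε := by
      have h2 : (n:ℝ) < 100/ε + 1 := Nat.ceil_lt_add_one (by positivity)
      have h4 : 100/ε + 2 ≤ 102/ε := by
        have h5 : (2:ℝ) ≤ 2/ε := by rw [le_div_iff₀ hε0]; nlinarith
        have e : (102:ℝ)/ε = 100/ε + 2/ε := by ring
        linarith
      linarith
    have hc2 : (0:ℝ) ≤ (n:ℝ)+1 := by positivity
    calc (((Finset.range (n+1) ×ˢ Finset.range (n+1)).image
        (fun p : ℕ × ℕ => gB ((p.1:ℝ)*(2/(n:ℝ))) ((p.2:ℝ)*(8/(n:ℝ)) - 4))).card : ℝ)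
        ≤ (((n+1)*(n+1) : ℕ) : ℝ) := by exact_mod_cast h1
      _ = ((n:ℝ)+1)*((n:ℝ)+1) := by push_cast; ring
      _ ≤ (102/ε)*(102/ε) := mul_le_mul hc1 hc1 hc2 (by positivity)
      _ ≤ (5/ε)^8 := by
          rw [div_pow]
          rw [show (102:ℝ)/ε*(102/ε) = 102^2/ε^2 from by ring]
          rw [div_le_div_iff₀ (by positivity) (by positivity)]
          have h6 : ε^6 ≤ 1 := pow_le_one₀ hε0.le hε1.le
          have h7 : (0:ℝ) < ε^2 := by positivity
          nlinarith [mul_le_mul_of_nonneg_left h6 h7.le]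
  · -- orthonormality
    intro γ hγ
    obtain ⟨p, _, rfl⟩ := Finset.mem_image.mp hγ
    exact my_gB_on _ _
  · -- covering
    intro β hβ
    have hβ00 := orthonormal_iff_ite.mp hβ 0 0
    rw [PiLp.inner_apply] at hβ00
    simp only [RCLike.inner_apply, Fin.sum_univ_two, if_true] at hβ00
    set a : ℂ := β 0 0 with ha_def
    set b : ℂ := β 0 1 with hb_def
    have hre : Complex.normSq a + Complex.normSq b = 1 := by
      have h' : a * (starRingEnd ℂ) a + b * (starRingEnd ℂ) b = 1 := by linear_combination hβ00
      rw [Complex.mul_conj, Complex.mul_conj] at h'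
      exact_mod_cast h'
    have habsa : ‖a‖ ≤ 1 := by
      nlinarith [Complex.sq_norm a, Complex.normSq_nonneg b, norm_nonneg a]
    have habsb : ‖b‖ ≤ 1 := by
      nlinarith [Complex.sq_norm b, Complex.normSq_nonneg a, norm_nonneg b]
    set t : ℝ := Real.arccos (‖a‖) with ht_def
    have ht0 : 0 ≤ t := Real.arccos_nonneg _
    have ht2 : t ≤ 2 := by
      have := (Real.arccos_le_pi_div_two (x := ‖a‖)).2 (norm_nonneg a)
      have := Real.pi_le_four
      linarith
    have hcost : Real.cos t = ‖a‖ :=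
      Real.cos_arccos (by linarith [norm_nonneg a]) habsa
    have hsint : Real.sin t = ‖b‖ := by
      rw [ht_def, Real.sin_arccos]
      rw [show 1 - ‖a‖ ^ 2 = ‖b‖ ^ 2 by
        rw [Complex.sq_norm, Complex.sq_norm]; linarith]
      exact Real.sqrt_sq (norm_nonneg b)
    -- phase removal
    set e : ℂ := Complex.exp (((-a.arg : ℝ):ℂ) * Complex.I) with he_def
    have hee : e * (starRingEnd ℂ) e = 1 := my_expI_mul_conj _
    have he2 : (starRingEnd ℂ) e * e = 1 := by rw [mul_comm]; exact hee
    set φ' : EuclideanSpace ℂ (Fin 2) := WithLp.toLp 2 (fun i => e * β 0 i) with hφ'def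
    have hφ'0 : φ' 0 = ((‖a‖ : ℝ) : ℂ) := by
      show e * a = _
      conv_lhs => rw [← Complex.norm_mul_exp_arg_mul_I a]
      rw [he_def, ← mul_assoc, mul_comm e, mul_assoc, ← Complex.exp_add]
      rw [show ((-a.arg : ℝ):ℂ) * Complex.I + (a.arg:ℂ) * Complex.I = 0 by push_cast; ring,
        Complex.exp_zero, mul_one]
    set c : ℂ := e * b with hc_def
    have hφ'1 : φ' 1 = c := rfl
    have habsc : ‖c‖ = ‖b‖ := by
      rw [hc_def, norm_mul, he_def, Complex.norm_exp_ofReal_mul_I, one_mul]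
    -- grid parameters
    have hδt : (0:ℝ) < 2/(n:ℝ) := by positivity
    have hδθ : (0:ℝ) < 8/(n:ℝ) := by positivity
    set j : ℕ := ⌊t / (2/(n:ℝ))⌋₊ with hj_def
    set tj : ℝ := (j:ℝ) * (2/(n:ℝ)) with htj_def
    have htj : |t - tj| ≤ 2/(n:ℝ) := my_floor_grid ht0 hδt
    have hjn : j ≤ n := by
      have h8 : t / (2/(n:ℝ)) ≤ (n:ℝ) := by
        rw [div_le_iff₀ hδt, show (n:ℝ)*(2/(n:ℝ)) = 2 from by field_simp]
        exact ht2
      have := Nat.floor_le_floor h8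
      simpa using this
    set x : ℝ := c.arg + 4 with hx_def
    have hx0 : 0 ≤ x := by
      have := Complex.neg_pi_lt_arg c
      have := Real.pi_le_four
      rw [hx_def]; linarith
    have hx8 : x ≤ 8 := by
      have := Complex.arg_le_pi c
      have := Real.pi_le_four
      rw [hx_def]; linarith
    set kk : ℕ := ⌊x / (8/(n:ℝ))⌋₊ with hkk_def
    set θk : ℝ := (kk:ℝ) * (8/(n:ℝ)) - 4 with hθk_def
    have hθkb : |c.arg - θk| ≤ 8/(n:ℝ) := by
      rw [show c.arg - θk = x - (kk:ℝ) * (8/(n:ℝ)) by rw [hθk_def, hx_def]; ring]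
      exact my_floor_grid hx0 hδθ
    have hkkn : kk ≤ n := by
      have h8 : x / (8/(n:ℝ)) ≤ (n:ℝ) := by
        rw [div_le_iff₀ hδθ, show (n:ℝ)*(8/(n:ℝ)) = 8 from by field_simp]
        exact hx8
      have := Nat.floor_le_floor h8
      simpa using this
    -- the candidate
    refine ⟨gB tj θk, Finset.mem_image.mpr ⟨(j, kk),
      Finset.mem_product.mpr ⟨Finset.mem_range.mpr (by omega), Finset.mem_range.mpr (by omega)⟩,
      rfl⟩, ?_⟩
    -- unit equations
    have hφ'unit : (starRingEnd ℂ) (φ' 0) * φ' 0 + (starRingEnd ℂ) (φ' 1) * φ' 1 = 1 := by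
      show (starRingEnd ℂ) (e * a) * (e * a) + (starRingEnd ℂ) (e * b) * (e * b) = 1
      simp only [_root_.map_mul]
      linear_combination ((starRingEnd ℂ) a * a + (starRingEnd ℂ) b * b) * he2 + hβ00
    have hgvunit : (starRingEnd ℂ) (gv tj θk 0) * gv tj θk 0
        + (starRingEnd ℂ) (gv tj θk 1) * gv tj θk 1 = 1 := by
      have h := orthonormal_iff_ite.mp (my_gB_on tj θk) 0 0
      rw [PiLp.inner_apply] at h
      simp only [RCLike.inner_apply, Fin.sum_univ_two, if_true] at h
      simp [gB] at h
      linear_combination h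
    have houter : outer φ' = outer (β 0) := by
      ext i1 j1
      show e * β 0 i1 * (starRingEnd ℂ) (e * β 0 j1) = β 0 i1 * (starRingEnd ℂ) (β 0 j1)
      simp only [_root_.map_mul]
      linear_combination (β 0 i1 * (starRingEnd ℂ) (β 0 j1)) * hee
    -- coordinate distances
    have d0 : ‖φ' 0 - gv tj θk 0‖ ≤ 2/(n:ℝ) := by
      rw [hφ'0, show gv tj θk 0 = ((Real.cos tj : ℝ) : ℂ) from rfl, ← hcost,
        ← Complex.ofReal_sub, Complex.norm_real, Real.norm_eq_abs]
      exact (my_cos_lip t tj).trans htj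
    have d1 : ‖φ' 1 - gv tj θk 1‖ ≤ 10/(n:ℝ) := by
      rw [hφ'1, show gv tj θk 1 = Complex.exp ((θk:ℂ) * Complex.I) * ((Real.sin tj : ℝ) : ℂ)
        from rfl]
      have hc2 : ((‖c‖ : ℝ) : ℂ) * Complex.exp ((c.arg:ℂ) * Complex.I) = c :=
        Complex.norm_mul_exp_arg_mul_I c
      have hsplit : c - Complex.exp ((θk:ℂ) * Complex.I) * ((Real.sin tj : ℝ) : ℂ)
          = ((‖c‖ : ℝ) : ℂ)
              * (Complex.exp ((c.arg:ℂ) * Complex.I) - Complex.exp ((θk:ℂ) * Complex.I))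
            + (((‖c‖ : ℝ) : ℂ) - ((Real.sin tj : ℝ) : ℂ))
              * Complex.exp ((θk:ℂ) * Complex.I) := by
        conv_lhs => rw [← hc2]
        ring
      rw [hsplit]
      have hterm1 : ‖((‖c‖ : ℝ) : ℂ)
          * (Complex.exp ((c.arg:ℂ) * Complex.I) - Complex.exp ((θk:ℂ) * Complex.I))‖
          ≤ 8/(n:ℝ) := by
        rw [norm_mul, Complex.norm_real, Real.norm_eq_abs, _root_.abs_of_nonneg (norm_nonneg c)]
        calc ‖c‖ * ‖Complex.exp ((c.arg:ℂ) * Complex.I)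
              - Complex.exp ((θk:ℂ) * Complex.I)‖
            ≤ 1 * |c.arg - θk| := by
              refine mul_le_mul ?_ (my_expI_sub c.arg θk) (norm_nonneg _) zero_le_one
              rw [habsc]; exact habsb
          _ ≤ 8/(n:ℝ) := by rw [one_mul]; exact hθkb
      have hterm2 : ‖(((‖c‖ : ℝ) : ℂ) - ((Real.sin tj : ℝ) : ℂ))
          * Complex.exp ((θk:ℂ) * Complex.I)‖ ≤ 2/(n:ℝ) := by
        rw [norm_mul, Complex.norm_exp_ofReal_mul_I, mul_one, ← Complex.ofReal_sub,
          Complex.norm_real, Real.norm_eq_abs, habsc, ← hsint]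
        exact (my_sin_lip t tj).trans htj
      calc ‖_‖ ≤ _ + _ := norm_add_le _ _
        _ ≤ 8/(n:ℝ) + 2/(n:ℝ) := add_le_add hterm1 hterm2
        _ = 10/(n:ℝ) := by ring
    -- trace norm bound at index 0
    have h0 : traceNorm (outer (β 0) - outer (gB tj θk 0)) ≤ 22/(n:ℝ) := by
      rw [show gB tj θk 0 = gv tj θk from rfl, ← houter]
      refine (my_key φ' (gv tj θk) hφ'unit hgvunit).trans ?_
      have hD : Complex.normSq (φ' 0 - gv tj θk 0) + Complex.normSq (φ' 1 - gv tj θk 1)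
          ≤ (11/(n:ℝ))^2 := by
        have e0 : Complex.normSq (φ' 0 - gv tj θk 0)
            = ‖φ' 0 - gv tj θk 0‖ ^ 2 := (Complex.sq_norm _).symm
        have e1 : Complex.normSq (φ' 1 - gv tj θk 1)
            = ‖φ' 1 - gv tj θk 1‖ ^ 2 := (Complex.sq_norm _).symm
        rw [e0, e1]
        have n0 := norm_nonneg (φ' 0 - gv tj θk 0)
        have n1 := norm_nonneg (φ' 1 - gv tj θk 1)
        have p0 : ‖φ' 0 - gv tj θk 0‖^2 ≤ (2/(n:ℝ))^2 := pow_le_pow_left₀ n0 d0 2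
        have p1 : ‖φ' 1 - gv tj θk 1‖^2 ≤ (10/(n:ℝ))^2 := pow_le_pow_left₀ n1 d1 2
        have hfrac : (2/(n:ℝ))^2 + (10/(n:ℝ))^2 ≤ (11/(n:ℝ))^2 := by
          rw [show (2/(n:ℝ))^2 + (10/(n:ℝ))^2 = 104/(n:ℝ)^2 from by ring,
            show (11/(n:ℝ))^2 = 121/(n:ℝ)^2 from by ring]
          exact (div_le_div_iff_of_pos_right (by positivity)).mpr (by norm_num)
        linarith
      have hsq : Real.sqrt (Complex.normSq (φ' 0 - gv tj θk 0)
          + Complex.normSq (φ' 1 - gv tj θk 1)) ≤ 11/(n:ℝ) := by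
        refine (Real.sqrt_le_sqrt hD).trans ?_
        rw [Real.sqrt_sq (by positivity)]
      calc 2 * Real.sqrt (Complex.normSq (φ' 0 - gv tj θk 0)
            + Complex.normSq (φ' 1 - gv tj θk 1))
          ≤ 2 * (11/(n:ℝ)) := mul_le_mul_of_nonneg_left hsq (by norm_num : (0:ℝ) ≤ 2)
        _ = 22/(n:ℝ) := by ring
    -- both indices
    have hsumβ := my_outer_sum β hβ
    have hsumγ := my_outer_sum (gB tj θk) (my_gB_on tj θk)
    have hball : ∀ i : Fin 2, traceNorm (outer (β i) - outer (gB tj θk i)) ≤ 22/(n:ℝ) := by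
      intro i
      fin_cases i
      · exact h0
      · have heq : outer (β 1) - outer (gB tj θk 1)
            = -(outer (β 0) - outer (gB tj θk 0)) := by
          have e1 : outer (β 1) = 1 - outer (β 0) := eq_sub_of_add_eq' hsumβ
          have e2 : outer (gB tj θk 1) = 1 - outer (gB tj θk 0) := eq_sub_of_add_eq' hsumγ
          rw [e1, e2]; abel
        show traceNorm (outer (β 1) - outer (gB tj θk 1)) ≤ 22/(n:ℝ)
        rw [heq, my_traceNorm_neg]
        exact h0
    have hfin : 22/(n:ℝ) ≤ (1 + 2 * Real.sqrt 2) * Real.sqrt ε :=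
      my_final hε0 hε1 hnpos hn100
    have hiSup : basisNorm β (gB tj θk)
        = ⨆ i : Fin 2, traceNorm (outer (β i) - outer (gB tj θk i)) := rfl
    rw [hiSup]
    exact (ciSup_le hball).trans hfin
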